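/- In a hidden Markov chain model, the entropies of future partial state sequences given the current state satisfy the backward recursion: for 0 ≤ t ≤ T−2 and every state j with P(S_t = j, X_{t+1}^{T−1} = x_{t+1}^{T−1}) > 0, H(S_{t+1}^{T−1} | S_t = j, X_{t+1}^{T−1} = x_{t+1}^{T−1}) = Σ_k P(S_{t+1} = k | S_t = j, X_{t+1}^{T−1} = x_{t+1}^{T−1}) { H(S_{t+2}^{T−1} | S_{t+1} = k, X_{t+2}^{T−1} = x_{t+2}^{T−1}) − log P(S_{t+1} = k | S_t = j, X_{t+1}^{T−1} = x_{t+1}^{T−1}) }, the sum ranging over the states k with positive conditional probability, and with the inner entropy term read as 0 when t = T−2. -/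

import Mathlib

/-- A hidden Markov chain (HMC) model with `J` states, observation alphabet
`{0, …, V-1}` and sequence length `T`: initial probabilities, transition
probabilities and emission probabilities. -/
structure HMCModel (J V T : ℕ) where
  init : Fin J → ℝ
  trans : Fin J → Fin J → ℝ
  emit : Fin J → Fin V → ℝ
  init_nonneg : ∀ j, 0 ≤ init j
  init_sum : ∑ j, init j = 1
  trans_nonneg : ∀ i j, 0 ≤ trans i j
  trans_sum : ∀ i, ∑ j, trans i j = 1
  emit_nonneg : ∀ j y, 0 ≤ emit j y
  emit_sum : ∀ j, ∑ y, emit j y = 1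

namespace HMCModel

variable {J V T : ℕ} [NeZero J] [NeZero T]

/-- The joint law of the state sequence and the observed sequence:
`P(S = s, X = x) = π_{s_0} b_{s_0}(x_0) ∏_{t=1}^{T-1} p_{s_{t-1} s_t} b_{s_t}(x_t)`. -/
noncomputable def joint (M : HMCModel J V T) (s : Fin T → Fin J) (x : Fin T → Fin V) : ℝ :=
  M.init (s 0) * M.emit (s 0) (x 0) *
    ∏ t ∈ Finset.univ.filter (fun t : Fin T => t ≠ 0),
      M.trans (s (t - 1)) (s t) * M.emit (s t) (x t)

open Classical in
/-- Probability of an event on (state sequence, observed sequence). -/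
noncomputable def pr (M : HMCModel J V T)
    (E : (Fin T → Fin J) → (Fin T → Fin V) → Prop) : ℝ :=
  ∑ s : Fin T → Fin J, ∑ y : Fin T → Fin V, if E s y then M.joint s y else 0

/-- Conditional probability `P(A | B)`; it is `0` when the conditioning event
has probability zero. -/
noncomputable def cpr (M : HMCModel J V T)
    (A B : (Fin T → Fin J) → (Fin T → Fin V) → Prop) : ℝ :=
  if 0 < M.pr B then M.pr (fun s y => A s y ∧ B s y) / M.pr B else 0

/-- Entropy of the random vector `f(S)` given the event `E`
(natural logarithm, with the convention `0 log 0 = 0`). -/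
noncomputable def condEnt (M : HMCModel J V T) {α : Type*} [Fintype α]
    (f : (Fin T → Fin J) → α)
    (E : (Fin T → Fin J) → (Fin T → Fin V) → Prop) : ℝ :=
  -∑ a : α, M.cpr (fun s _ => f s = a) E * Real.log (M.cpr (fun s _ => f s = a) E)

/-- Entropy of `f(S)` given the random vector `g(S)` and the event `E`:
`H(f(S) | g(S), E) = ∑_c P(g(S) = c | E) H(f(S) | g(S) = c, E)`. -/
noncomputable def condEntGiven (M : HMCModel J V T) {α β : Type*} [Fintype α] [Fintype β]
    (f : (Fin T → Fin J) → α) (g : (Fin T → Fin J) → β)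
    (E : (Fin T → Fin J) → (Fin T → Fin V) → Prop) : ℝ :=
  ∑ c : β, M.cpr (fun s _ => g s = c) E * M.condEnt f (fun s y => g s = c ∧ E s y)

/-- The event `X = x`. -/
def obsEq (x : Fin T → Fin V) : (Fin T → Fin J) → (Fin T → Fin V) → Prop :=
  fun _ y => y = x

/-- The partial state vector `S_0^{t-1}` (coordinates `≥ t` are padded by `0`). -/
def prefixVar (t : ℕ) (s : Fin T → Fin J) : Fin T → Fin J :=
  fun r => if (r : ℕ) < t then s r else 0

/-- The partial state vector `S_t^{T-1}` (coordinates `< t` are padded by `0`). -/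
def suffixVar (t : ℕ) (s : Fin T → Fin J) : Fin T → Fin J :=
  fun r => if t ≤ (r : ℕ) then s r else 0

end HMCModel

/-!
Write `E` for the event `S_t = j, X_{t+1}^{T-1} = x_{t+1}^{T-1}`. Since `S_{t+1}` is a function
of `S_{t+1}^{T-1}`, the chain rule gives
`H(S_{t+1}^{T-1} | E) = H(S_{t+1} | E) + Σ_k q_k H(S_{t+1}^{T-1} | S_{t+1} = k, E)`, and once
`S_{t+1} = k` is fixed, `S_{t+1}^{T-1}` and `S_{t+2}^{T-1}` determine each other.

It remains to drop `S_t = j` and `X_{t+1}` from the conditioning, which is the Markov property: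
the joint weight factors as a past part, depending on `S_0^{t+1}` and `X_0^{t+1}`, times a future
part, depending on `S_{t+1}^{T-1}` and `X_{t+2}^{T-1}`. Hence, on any event about the past that
fixes `S_{t+1} = k` and `X_{t+2}^{T-1}`, the conditional law of `S_{t+2}^{T-1}` is the normalised
future part, whatever the event.
-/

namespace HMCModel

open Finset Real

variable {J V T : ℕ}

structure IsPinnedAt (t₁ : Fin T) (k : Fin J) (x : Fin T → Fin V)
    (D : (Fin T → Fin J) → (Fin T → Fin V) → Prop) : Prop where
  iff_of_eqOn : ∀ s s' y, (∀ r, r ≤ t₁ → s r = s' r) → (D s y ↔ D s' y)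
  state_eq : ∀ s y, D s y → s t₁ = k
  obs_eq : ∀ s y, D s y → ∀ r, t₁ < r → y r = x r

section Suffix

variable [NeZero J]

theorem suffixVar_apply_of_le {u : ℕ} {r : Fin T} (h : u ≤ r) (s : Fin T → Fin J) :
    suffixVar u s r = s r :=
  if_pos h

theorem suffixVar_suffixVar_of_le {u v : ℕ} (h : u ≤ v) (s : Fin T → Fin J) :
    suffixVar v (suffixVar u s) = suffixVar v s := by
  funext r
  simp only [suffixVar]
  split_ifs <;> first | rfl | omega

theorem suffixVar_eq_update {u : ℕ} {t₁ : Fin T} (ht₁ : (t₁ : ℕ) = u) (s : Fin T → Fin J) :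
    suffixVar u s = Function.update (suffixVar (u + 1) s) t₁ (s t₁) := by
  funext r
  rcases eq_or_ne r t₁ with rfl | hr
  · simp [suffixVar, ht₁]
  · have : (r : ℕ) ≠ u := fun h => hr (Fin.ext (h.trans ht₁.symm))
    simp only [suffixVar, Function.update_of_ne hr]
    split_ifs <;> first | rfl | omega

theorem sum_ite_suffixVar_eq {R : Type*} [AddCommMonoid R] {u : ℕ} {w w' : Fin T → Fin J}
    (hw : suffixVar u w = w) (hw' : suffixVar u w' = w') {Φ : (Fin T → Fin J) → R}
    (hΦ : ∀ s s', (∀ r : Fin T, (r : ℕ) < u → s r = s' r) → Φ s = Φ s') :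
    ∑ s, (if suffixVar u s = w then Φ s else 0) = ∑ s, if suffixVar u s = w' then Φ s else 0 := by
  have hlow : ∀ r : Fin T, (r : ℕ) < u → w r = w' r := fun r hr => by
    rw [← hw, ← hw']; simp [suffixVar, not_le.2 hr]
  refine Fintype.sum_equiv (Equiv.piCongrRight fun r => Equiv.swap (w r) (w' r)) _ _ fun s => ?_
  have hs : suffixVar u s = w ↔ suffixVar u (fun r => Equiv.swap (w r) (w' r) (s r)) = w' := by
    rw [← hw, ← hw', funext_iff, funext_iff]
    refine forall_congr' fun r => ?_
    by_cases hr : u ≤ (r : ℕ)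
    · simp [suffixVar, hr, Equiv.swap_apply_eq_iff]
    · simp [suffixVar, hr]
  rw [hΦ s _ fun r hr => ?_]
  · exact if_congr hs rfl rfl
  · show s r = Equiv.swap (w r) (w' r) (s r)
    rw [hlow r hr, Equiv.swap_self, Equiv.refl_apply]

end Suffix

variable [NeZero T] (M : HMCModel J V T)

section Probability

variable {A A' B E E' : (Fin T → Fin J) → (Fin T → Fin V) → Prop}

theorem joint_nonneg (s : Fin T → Fin J) (y : Fin T → Fin V) : 0 ≤ M.joint s y :=
  mul_nonneg (mul_nonneg (M.init_nonneg _) (M.emit_nonneg _ _))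
    (prod_nonneg fun _ _ => mul_nonneg (M.trans_nonneg _ _) (M.emit_nonneg _ _))

theorem pr_nonneg (E : (Fin T → Fin J) → (Fin T → Fin V) → Prop) : 0 ≤ M.pr E :=
  sum_nonneg fun s _ => sum_nonneg fun y _ => by
    split_ifs
    exacts [M.joint_nonneg s y, le_rfl]

theorem pr_congr (h : ∀ s y, E s y ↔ E' s y) : M.pr E = M.pr E' := by
  obtain rfl : E = E' := funext₂ fun s y => propext (h s y)
  rfl

theorem pr_mono (h : ∀ s y, E s y → E' s y) : M.pr E ≤ M.pr E' :=
  sum_le_sum fun s _ => sum_le_sum fun y _ => by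
    by_cases hE : E s y
    · simp [hE, h s y hE]
    · simp only [hE, if_false]
      split_ifs
      exacts [M.joint_nonneg s y, le_rfl]

theorem pr_eq_zero (h : ∀ s y, ¬ E s y) : M.pr E = 0 :=
  sum_eq_zero fun s _ => sum_eq_zero fun y _ => if_neg (h s y)

theorem sum_pr_and {α : Type*} [Fintype α] (f : (Fin T → Fin J) → α)
    (E : (Fin T → Fin J) → (Fin T → Fin V) → Prop) :
    ∑ a, M.pr (fun s y => f s = a ∧ E s y) = M.pr E := by
  classical
  unfold pr
  rw [sum_comm]
  refine sum_congr rfl fun s _ => ?_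
  rw [sum_comm]
  refine sum_congr rfl fun y _ => ?_
  by_cases hE : E s y <;> simp [hE]

theorem cpr_nonneg (A B : (Fin T → Fin J) → (Fin T → Fin V) → Prop) : 0 ≤ M.cpr A B := by
  unfold cpr
  split_ifs
  exacts [div_nonneg (M.pr_nonneg _) (M.pr_nonneg _), le_rfl]

theorem cpr_congr (hA : ∀ s y, E s y → (A s y ↔ A' s y)) : M.cpr A E = M.cpr A' E := by
  unfold cpr
  rw [M.pr_congr fun s y => and_congr_left (hA s y)]

theorem cpr_eq_zero (h : ∀ s y, ¬ (A s y ∧ B s y)) : M.cpr A B = 0 := by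
  simp [cpr, M.pr_eq_zero h]

theorem pr_and_pos_of_cpr_pos (h : 0 < M.cpr A B) : 0 < M.pr (fun s y => A s y ∧ B s y) := by
  unfold cpr at h
  split_ifs at h with hB
  · exact (div_pos_iff_of_pos_right hB).1 h
  · exact absurd h (lt_irrefl 0)

theorem sum_cpr {α : Type*} [Fintype α] (f : (Fin T → Fin J) → α) (hE : 0 < M.pr E) :
    ∑ a, M.cpr (fun s _ => f s = a) E = 1 := by
  simp only [cpr, if_pos hE]
  rw [← sum_div, M.sum_pr_and f E, div_self hE.ne']

theorem cpr_and (A B E : (Fin T → Fin J) → (Fin T → Fin V) → Prop) :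
    M.cpr (fun s y => A s y ∧ B s y) E = M.cpr B E * M.cpr A (fun s y => B s y ∧ E s y) := by
  unfold cpr
  have hAB : M.pr (fun s y => (A s y ∧ B s y) ∧ E s y) = M.pr (fun s y => A s y ∧ B s y ∧ E s y) :=
    M.pr_congr fun s y => and_assoc
  by_cases hBE : 0 < M.pr (fun s y => B s y ∧ E s y)
  · have hE : 0 < M.pr E := hBE.trans_le (M.pr_mono fun s y h => h.2)
    rw [if_pos hE, if_pos hE, if_pos hBE, hAB]
    field_simp
  · have hBE0 : M.pr (fun s y => B s y ∧ E s y) = 0 := le_antisymm (not_lt.1 hBE) (M.pr_nonneg _)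
    have hABE0 : M.pr (fun s y => A s y ∧ B s y ∧ E s y) = 0 :=
      le_antisymm (hBE0 ▸ M.pr_mono fun s y h => h.2) (M.pr_nonneg _)
    simp [hAB, hBE0, hABE0]

end Probability

section Entropy

variable {α β : Type*} [Fintype α] [Fintype β] {E : (Fin T → Fin J) → (Fin T → Fin V) → Prop}

theorem condEnt_eq_sum_negMulLog (f : (Fin T → Fin J) → α) :
    M.condEnt f E = ∑ a, negMulLog (M.cpr (fun s _ => f s = a) E) := by
  simp [condEnt, negMulLog, sum_neg_distrib]

theorem condEnt_eq_zero_of_forall_eq {f : (Fin T → Fin J) → α} {a : α}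
    (h : ∀ s y, E s y → f s = a) : M.condEnt f E = 0 := by
  classical
  rw [condEnt_eq_sum_negMulLog]
  refine sum_eq_zero fun b _ => ?_
  by_cases hb : b = a
  · subst hb
    by_cases hE : 0 < M.pr E
    · have : M.pr (fun s y => f s = b ∧ E s y) = M.pr E :=
        M.pr_congr fun s y => and_iff_right_of_imp (h s y)
      simp [cpr, hE, this, hE.ne']
    · simp [cpr, hE]
  · rw [M.cpr_eq_zero (A := fun s _ => f s = b) fun s y hs => hb (hs.1 ▸ h s y hs.2),
      negMulLog_zero]

theorem mul_sum_cpr (f : (Fin T → Fin J) → α) (B E : (Fin T → Fin J) → (Fin T → Fin V) → Prop)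
    (c : ℝ) (hc : M.cpr B E = 0 → c = 0) :
    c * ∑ a, M.cpr (fun s _ => f s = a) (fun s y => B s y ∧ E s y) = c := by
  by_cases hBE : 0 < M.pr (fun s y => B s y ∧ E s y)
  · rw [M.sum_cpr f hBE, mul_one]
  · have hBE0 : M.pr (fun s y => B s y ∧ E s y) = 0 := le_antisymm (not_lt.1 hBE) (M.pr_nonneg _)
    rw [hc (by simp [cpr, hBE0]), zero_mul]

theorem condEnt_eq_add_condEntGiven (f : (Fin T → Fin J) → α) {g : (Fin T → Fin J) → β}
    (e : α → β) (hg : ∀ s, g s = e (f s)) :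
    M.condEnt f E = M.condEnt g E + M.condEntGiven f g E := by
  classical
  set P : β → ℝ := fun b => M.cpr (fun s _ => g s = b) E
  set Q : β → α → ℝ := fun b a => M.cpr (fun s _ => f s = a) (fun s y => g s = b ∧ E s y)
  have hQ : ∀ a b, e a ≠ b → Q b a = 0 := fun a b hab =>
    M.cpr_eq_zero fun s y h => hab (h.1 ▸ h.2.1 ▸ (hg s).symm)
  have hfactor : ∀ a, M.cpr (fun s _ => f s = a) E = P (e a) * Q (e a) a := by
    intro a
    rw [← M.cpr_and]
    exact M.cpr_congr fun s y _ => ⟨fun h => ⟨h, h ▸ hg s⟩, And.left⟩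
  calc M.condEnt f E
      = ∑ a, ∑ b, negMulLog (P b * Q b a) := by
        rw [condEnt_eq_sum_negMulLog]
        refine sum_congr rfl fun a _ => ?_
        rw [hfactor, sum_eq_single (e a) (fun b _ hb => ?_) (by simp)]
        rw [hQ a b (Ne.symm hb), mul_zero, negMulLog_zero]
    _ = ∑ b, (negMulLog (P b) * ∑ a, Q b a + P b * ∑ a, negMulLog (Q b a)) := by
        rw [sum_comm]
        refine sum_congr rfl fun b _ => ?_
        rw [mul_sum, mul_sum, ← sum_add_distrib]
        exact sum_congr rfl fun a _ => by rw [negMulLog_mul]; ring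
    _ = M.condEnt g E + M.condEntGiven f g E := by
        rw [condEnt_eq_sum_negMulLog, condEntGiven, ← sum_add_distrib]
        refine sum_congr rfl fun b _ => ?_
        rw [M.mul_sum_cpr f _ _ _ fun hP => by simp [P, hP], condEnt_eq_sum_negMulLog]

end Entropy

section SuffixEntropy

variable [NeZero J] {E : (Fin T → Fin J) → (Fin T → Fin V) → Prop}

theorem condEnt_suffixVar_of_le {u : ℕ} (hu : T ≤ u) : M.condEnt (suffixVar u) E = 0 :=
  M.condEnt_eq_zero_of_forall_eq (a := fun _ => 0) fun s _ _ =>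
    funext fun r => if_neg (by omega)

theorem condEnt_suffixVar_eq_condEnt_succ {u : ℕ} {t₁ : Fin T} (ht₁ : (t₁ : ℕ) = u) (k : Fin J) :
    M.condEnt (suffixVar u) (fun s y => s t₁ = k ∧ E s y)
      = M.condEnt (suffixVar (u + 1)) (fun s y => s t₁ = k ∧ E s y) := by
  rw [M.condEnt_eq_add_condEntGiven _ _ fun s => (suffixVar_suffixVar_of_le u.le_succ s).symm,
    add_eq_left]
  refine sum_eq_zero fun w _ => mul_eq_zero_of_right _ ?_
  exact M.condEnt_eq_zero_of_forall_eq fun s y h => by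
    rw [suffixVar_eq_update ht₁, h.1, h.2.1]

theorem condEnt_suffixVar_eq_sum {u : ℕ} {t₁ : Fin T} (ht₁ : (t₁ : ℕ) = u) :
    M.condEnt (suffixVar u) E
      = ∑ k, (M.cpr (fun s _ => s t₁ = k) E
          * M.condEnt (suffixVar (u + 1)) (fun s y => s t₁ = k ∧ E s y)
        + negMulLog (M.cpr (fun s _ => s t₁ = k) E)) := by
  rw [M.condEnt_eq_add_condEntGiven _ (fun v => v t₁)
      fun s => (suffixVar_apply_of_le ht₁.ge s).symm,
    condEntGiven, condEnt_eq_sum_negMulLog, add_comm, ← sum_add_distrib]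
  simp only [M.condEnt_suffixVar_eq_condEnt_succ ht₁]

end SuffixEntropy

section Markov

noncomputable def pastFactor (u : ℕ) (s : Fin T → Fin J) (y : Fin T → Fin V) : ℝ :=
  M.init (s 0) * M.emit (s 0) (y 0) *
    ∏ r ∈ univ.filter (fun r : Fin T => r ≠ 0 ∧ (r : ℕ) < u),
      M.trans (s (r - 1)) (s r) * M.emit (s r) (y r)

noncomputable def futureFactor (u : ℕ) (s : Fin T → Fin J) (y : Fin T → Fin V) : ℝ :=
  ∏ r ∈ univ.filter (fun r : Fin T => u ≤ (r : ℕ)), M.trans (s (r - 1)) (s r) * M.emit (s r) (y r)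

theorem joint_eq_pastFactor_mul_futureFactor {u : ℕ} (hu : 1 ≤ u) (s : Fin T → Fin J)
    (y : Fin T → Fin V) : M.joint s y = M.pastFactor u s y * M.futureFactor u s y := by
  rw [joint, pastFactor, futureFactor,
    ← prod_filter_mul_prod_filter_not _ (fun r : Fin T => (r : ℕ) < u), filter_filter, filter_filter, ← mul_assoc]
  congr 2
  refine filter_congr fun r _ => ?_
  simp only [not_lt, and_iff_right_iff_imp]
  rintro hr rfl
  simp at hr
  omega

theorem pastFactor_congr {u : ℕ} (hu : 1 ≤ u) {s s' : Fin T → Fin J} (y : Fin T → Fin V)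
    (h : ∀ r : Fin T, (r : ℕ) < u → s r = s' r) : M.pastFactor u s y = M.pastFactor u s' y := by
  rw [pastFactor, pastFactor, h 0 (by simp; omega)]
  refine congrArg _ (prod_congr rfl fun r hr => ?_)
  obtain ⟨hr0, hru⟩ := (mem_filter.1 hr).2
  rw [h r hru, h (r - 1) (by rw [Fin.val_sub_one_of_ne_zero hr0]; omega)]

theorem futureFactor_congr {u : ℕ} (hu : 1 ≤ u) {s s' : Fin T → Fin J} {y y' : Fin T → Fin V}
    (hs : ∀ r : Fin T, u ≤ (r : ℕ) + 1 → s r = s' r) (hy : ∀ r : Fin T, u ≤ (r : ℕ) → y r = y' r) :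
    M.futureFactor u s y = M.futureFactor u s' y' := by
  refine prod_congr rfl fun r hr => ?_
  have hru : u ≤ (r : ℕ) := (mem_filter.1 hr).2
  have hr0 : r ≠ 0 := by rintro rfl; simp at hru; omega
  rw [hs r (by omega), hs (r - 1) (by rw [Fin.val_sub_one_of_ne_zero hr0]; omega), hy r hru]

variable [NeZero J]

noncomputable def futureWeight (u : ℕ) (t₁ : Fin T) (k : Fin J) (x : Fin T → Fin V)
    (w : Fin T → Fin J) : ℝ :=
  if suffixVar u w = w then M.futureFactor u (Function.update w t₁ k) x else 0

variable {u : ℕ} {t₁ : Fin T} {k : Fin J} {x : Fin T → Fin V}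
  {D D' : (Fin T → Fin J) → (Fin T → Fin V) → Prop}

theorem exists_pr_suffixVar_and_eq_mul_futureWeight (ht₁ : (t₁ : ℕ) + 1 = u)
    (hD : IsPinnedAt t₁ k x D) :
    ∃ F : ℝ, ∀ w, M.pr (fun s y => suffixVar u s = w ∧ D s y) = F * M.futureWeight u t₁ k x w := by
  classical
  set Φ : (Fin T → Fin J) → ℝ := fun s => ∑ y, if D s y then M.pastFactor u s y else 0
  have hΦ : ∀ s s', (∀ r : Fin T, (r : ℕ) < u → s r = s' r) → Φ s = Φ s' := fun s s' h =>
    have hle : ∀ r, r ≤ t₁ → s r = s' r := fun r hr => h r (by rw [Fin.le_def] at hr; omega)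
    sum_congr rfl fun y _ => by
      rw [M.pastFactor_congr (by omega) y h, if_congr (hD.iff_of_eqOn s s' y hle) rfl rfl]
  refine ⟨∑ s, if suffixVar u s = 0 then Φ s else 0, fun w => ?_⟩
  by_cases hw : suffixVar u w = w
  swap
  · rw [futureWeight, if_neg hw, mul_zero]
    exact M.pr_eq_zero fun s y h => hw (h.1 ▸ suffixVar_suffixVar_of_le le_rfl s)
  have hjoint : ∀ s y, suffixVar u s = w → D s y →
      M.joint s y = M.pastFactor u s y * M.futureWeight u t₁ k x w := by
    intro s y hs hsy
    rw [M.joint_eq_pastFactor_mul_futureFactor (u := u) (by omega), futureWeight, if_pos hw]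
    refine congrArg _ (M.futureFactor_congr (u := u) (by omega) (fun r hr => ?_) fun r hr =>
      hD.obs_eq s y hsy r (by rw [Fin.lt_def]; omega))
    rcases eq_or_ne r t₁ with rfl | hrt
    · rw [Function.update_self, hD.state_eq s y hsy]
    · have hur : u ≤ (r : ℕ) := by have := Fin.val_ne_of_ne hrt; omega
      rw [Function.update_of_ne hrt, ← hs, suffixVar_apply_of_le hur]
  calc M.pr (fun s y => suffixVar u s = w ∧ D s y)
      = ∑ s, (if suffixVar u s = w then Φ s else 0) * M.futureWeight u t₁ k x w := by
        refine sum_congr rfl fun s _ => ?_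
        by_cases hs : suffixVar u s = w
        · simp only [hs, if_true, true_and, Φ, sum_mul]
          refine sum_congr rfl fun y _ => ?_
          split_ifs with hsy
          exacts [hjoint s y hs hsy, (zero_mul _).symm]
        · simp [hs]
    _ = _ := by
        rw [← sum_mul, sum_ite_suffixVar_eq (w' := 0) hw (funext fun _ => ite_self _) hΦ]

theorem cpr_suffixVar_eq_futureWeight_div (ht₁ : (t₁ : ℕ) + 1 = u) (hD : IsPinnedAt t₁ k x D)
    (hpos : 0 < M.pr D) (w : Fin T → Fin J) :
    M.cpr (fun s _ => suffixVar u s = w) D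
      = M.futureWeight u t₁ k x w / ∑ w', M.futureWeight u t₁ k x w' := by
  obtain ⟨F, hF⟩ := M.exists_pr_suffixVar_and_eq_mul_futureWeight ht₁ hD
  have hprD : M.pr D = F * ∑ w', M.futureWeight u t₁ k x w' := by
    rw [← M.sum_pr_and (suffixVar u) D, mul_sum]
    exact sum_congr rfl fun w' _ => hF w'
  have hF0 : F ≠ 0 := by
    rintro rfl
    rw [zero_mul] at hprD
    exact hpos.ne' hprD
  rw [cpr, if_pos hpos, hF, hprD, mul_div_mul_left _ _ hF0]

/-- The Markov property: given `S_{t₁} = k` and the future observations, the law of the future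
states does not depend on the past. -/
theorem condEnt_suffixVar_eq_of_isPinnedAt (ht₁ : (t₁ : ℕ) + 1 = u) (hD : IsPinnedAt t₁ k x D)
    (hD' : IsPinnedAt t₁ k x D') (hpos : 0 < M.pr D) (hpos' : 0 < M.pr D') :
    M.condEnt (suffixVar u) D = M.condEnt (suffixVar u) D' := by
  simp only [condEnt, M.cpr_suffixVar_eq_futureWeight_div ht₁ hD hpos,
    M.cpr_suffixVar_eq_futureWeight_div ht₁ hD' hpos']

end Markov

end HMCModel

open HMCModel

theorem hmc_hernando_backward_recursion_general
    {J V T : ℕ} [NeZero J] [NeZero T] (M : HMCModel J V T)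
    (x : Fin T → Fin V) (t : Fin T) (ht : (t : ℕ) < T - 1) (j : Fin J)
    (q : Fin J → ℝ)
    (hq : ∀ k, q k = M.cpr (fun s _ => s (t + 1) = k)
        (fun s y => s t = j ∧ ∀ r : Fin T, t < r → y r = x r)) :
    M.condEnt (suffixVar ((t : ℕ) + 1))
        (fun s y => s t = j ∧ ∀ r : Fin T, t < r → y r = x r)
      = ∑ k ∈ Finset.univ.filter (fun k : Fin J => 0 < q k),
          q k * ((if (t : ℕ) = T - 2 then 0
                  else M.condEnt (suffixVar ((t : ℕ) + 2))
                      (fun s y => s (t + 1) = k ∧ ∀ r : Fin T, t + 1 < r → y r = x r))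
                 - Real.log (q k)) := by
  have ht₁ : ((t + 1 : Fin T) : ℕ) = t + 1 := Fin.val_add_one_of_lt' (by omega)
  have hlt : ∀ r : Fin T, t + 1 < r → t < r := fun r hr => by
    rw [Fin.lt_def] at hr ⊢; omega
  rw [M.condEnt_suffixVar_eq_sum ht₁, Finset.sum_filter]
  refine Finset.sum_congr rfl fun k _ => ?_
  rw [← hq k]
  split_ifs with hqk htT
  · rw [M.condEnt_suffixVar_of_le (by omega), Real.negMulLog]; ring
  · have hpast : IsPinnedAt (t + 1) k x
        (fun s y => s (t + 1) = k ∧ s t = j ∧ ∀ r : Fin T, t < r → y r = x r) :=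
      ⟨fun s s' y h => by
        rw [h _ le_rfl, h t (by rw [Fin.le_def]; omega)], fun _ _ h => h.1,
        fun _ _ h r hr => h.2.2 r (hlt r hr)⟩
    have hpresent : IsPinnedAt (t + 1) k x
        (fun s y => s (t + 1) = k ∧ ∀ r : Fin T, t + 1 < r → y r = x r) :=
      ⟨fun s s' y h => by rw [h _ le_rfl], fun _ _ h => h.1, fun _ _ h => h.2⟩
    have hpos := M.pr_and_pos_of_cpr_pos (hq k ▸ hqk)
    rw [M.condEnt_suffixVar_eq_of_isPinnedAt (by omega) hpast hpresent hpos
      (hpos.trans_le (M.pr_mono fun s y h => ⟨h.1, fun r hr => h.2.2 r (hlt r hr)⟩)),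
      Real.negMulLog]
    ring
  · have hq0 : q k = 0 := le_antisymm (not_lt.1 hqk) (hq k ▸ M.cpr_nonneg _ _)
    simp [hq0]

/-- In a hidden Markov chain model, the entropies of future partial
state sequences given the current state satisfy the backward recursion: for
`0 ≤ t ≤ T-2` and every state `j` with `P(S_t = j, X_{t+1}^{T-1} = x_{t+1}^{T-1}) > 0`,
`H(S_{t+1}^{T-1} | S_t = j, X_{t+1}^{T-1} = x_{t+1}^{T-1})
  = ∑_k P(S_{t+1} = k | S_t = j, X_{t+1}^{T-1} = x_{t+1}^{T-1})
      { H(S_{t+2}^{T-1} | S_{t+1} = k, X_{t+2}^{T-1} = x_{t+2}^{T-1})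
        − log P(S_{t+1} = k | S_t = j, X_{t+1}^{T-1} = x_{t+1}^{T-1}) }`,
the sum ranging over the states `k` with positive conditional probability, and with
the inner entropy term read as `0` when `t = T-2`. -/
theorem hmc_hernando_backward_recursion
    {J V T : ℕ} [NeZero J] [NeZero T] (M : HMCModel J V T)
    (x : Fin T → Fin V) (t : Fin T) (ht : (t : ℕ) < T - 1) (j : Fin J)
    (hpos : 0 < M.pr (fun s y => s t = j ∧ ∀ r : Fin T, t < r → y r = x r))
    (q : Fin J → ℝ)
    (hq : ∀ k, q k = M.cpr (fun s _ => s (t + 1) = k)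
        (fun s y => s t = j ∧ ∀ r : Fin T, t < r → y r = x r)) :
    M.condEnt (suffixVar ((t : ℕ) + 1))
        (fun s y => s t = j ∧ ∀ r : Fin T, t < r → y r = x r)
      = ∑ k ∈ Finset.univ.filter (fun k : Fin J => 0 < q k),
          q k * ((if (t : ℕ) = T - 2 then 0
                  else M.condEnt (suffixVar ((t : ℕ) + 2))
                      (fun s y => s (t + 1) = k ∧ ∀ r : Fin T, t + 1 < r → y r = x r))
                 - Real.log (q k)) :=
  hmc_hernando_backward_recursion_general M x t ht j q hq
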